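/- arXiv:2506.08465 — 2 statements merged into one kernel-verified Lean document; each statement's English description precedes it below -/
import Mathlib

section
/- Let T > 0, let c ≥ 1 + √(1 + 2T), and let g : [0,1] × [0,T] → ℝ be of class C¹ with |g| and its first derivatives bounded by a constant G. There exist a number λ₀ ≥ 1 and a constant C₂ > 0 (depending only on c, T, G) such that for every λ ≥ λ₀ and every pair of functions u, v : [0,1] × [0,T] → ℝ of class C² satisfying ∂ₓu(0,t) = ∂ₓu(1,t) = ∂ₓv(0,t) = ∂ₓv(1,t) = 0 for all t ∈ [0,T], the following quasi-Carleman estimate holds: ∫₀ᵀ∫₀¹ (∂ₜu − ∂ₓₓu + g ∂ₓₓv)² φ_λ² dx dt ≥ λ c^{λ−1} ∫₀ᵀ∫₀¹ (∂ₓu)² φ_λ² dx dt + (λ²/4) c^{2λ−2} ∫₀ᵀ∫₀¹ u² φ_λ² dx dt − C₂ λ (T+c)^λ ∫₀ᵀ∫₀¹ (∂ₓv)² φ_λ² dx dt − C₂ λ (T+c)^λ e^{2(T+c)^λ} ∫₀¹ u²(x,0) dx. -/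
/-!
Write `A = λ (T - t + c)^(λ-1)`, so that `φ' = -A φ`, and `L = ∂ₜu - ∂ₓₓu + g ∂ₓₓv`.
Expanding `(L - A u)² φ² ≥ 0` gives `L² φ² ≥ 2 A φ² u L - A² u² φ²`, and `2 A φ² u L` is the
divergence `∂ₜP + ∂ₓΦ` of the field `P = A φ² u²`, `Φ = 2 A φ² (u g ∂ₓv - u ∂ₓu)` plus
`(2 A² - A') φ² u² + 2 A φ² (∂ₓu)² - 2 A φ² (∂ₓu g ∂ₓv + u ∂ₓg ∂ₓv)`.
By the divergence theorem on `[0, 1] × [0, T]` the Neumann conditions kill the flux of `Φ`, the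
flux of `P` through `t = T` is nonnegative and the one through `t = 0` is bounded by the last
term of the estimate. Young's inequality on the cross terms, `A' ≤ 0` and `λ c^(λ-1) ≤ A ≤ λ (T + c)^λ`
leave the weighted norms of `∂ₓu`, `u` and `∂ₓv`.
-/

open MeasureTheory intervalIntegral

/-- The Carleman Weight Function `φ_λ(t) = exp((T − t + c)^λ)`. -/
noncomputable def carlemanWeight (T c lam t : ℝ) : ℝ := Real.exp ((T - t + c) ^ lam)

open Function Set

noncomputable section

def partialFst (u : ℝ → ℝ → ℝ) (x t : ℝ) : ℝ := deriv (fun y => u y t) x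

def partialSnd (u : ℝ → ℝ → ℝ) (x t : ℝ) : ℝ := deriv (fun s => u x s) t

section PartialDerivatives

variable {F : ℝ × ℝ → ℝ} {u : ℝ → ℝ → ℝ} {x t : ℝ}

lemma fderiv_apply_one_zero {p : ℝ × ℝ} (hF : DifferentiableAt ℝ F p) :
    fderiv ℝ F p (1, 0) = deriv (fun s => F (s, p.2)) p.1 :=
  (hF.hasFDerivAt.comp_hasDerivAt p.1
    ((hasDerivAt_id p.1).prodMk (hasDerivAt_const p.1 p.2))).deriv.symm

lemma fderiv_apply_zero_one {p : ℝ × ℝ} (hF : DifferentiableAt ℝ F p) :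
    fderiv ℝ F p (0, 1) = deriv (fun s => F (p.1, s)) p.2 :=
  (hF.hasFDerivAt.comp_hasDerivAt p.2
    ((hasDerivAt_const p.2 p.1).prodMk (hasDerivAt_id p.2))).deriv.symm

lemma hasDerivAt_partialFst (hu : DifferentiableAt ℝ (uncurry u) (x, t)) :
    HasDerivAt (fun y => u y t) (partialFst u x t) x :=
  show HasDerivAt (uncurry u ∘ fun y => (y, t)) _ x from
  (hu.comp x (differentiableAt_id.prodMk (differentiableAt_const t))).hasDerivAt

lemma hasDerivAt_partialSnd (hu : DifferentiableAt ℝ (uncurry u) (x, t)) :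
    HasDerivAt (fun s => u x s) (partialSnd u x t) t :=
  show HasDerivAt (uncurry u ∘ fun s => (x, s)) _ t from
  (hu.comp t ((differentiableAt_const x).prodMk differentiableAt_id)).hasDerivAt

lemma contDiff_partialFst {m n : WithTop ℕ∞} (hmn : m + 1 ≤ n)
    (hu : ContDiff ℝ n (uncurry u)) : ContDiff ℝ m (uncurry (partialFst u)) := by
  have hdiff := hu.differentiable fun h => by simp [h] at hmn
  have : uncurry (partialFst u) = fun p => fderiv ℝ (uncurry u) p (1, 0) :=
    funext fun p => (fderiv_apply_one_zero (hdiff p)).symm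
  rw [this]
  exact (hu.fderiv_right hmn).clm_apply contDiff_const

lemma contDiff_partialSnd {m n : WithTop ℕ∞} (hmn : m + 1 ≤ n)
    (hu : ContDiff ℝ n (uncurry u)) : ContDiff ℝ m (uncurry (partialSnd u)) := by
  have hdiff := hu.differentiable fun h => by simp [h] at hmn
  have : uncurry (partialSnd u) = fun p => fderiv ℝ (uncurry u) p (0, 1) :=
    funext fun p => (fderiv_apply_zero_one (hdiff p)).symm
  rw [this]
  exact (hu.fderiv_right hmn).clm_apply contDiff_const

lemma abs_partialFst_le_norm_fderiv (hu : DifferentiableAt ℝ (uncurry u) (x, t)) :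
    |partialFst u x t| ≤ ‖fderiv ℝ (uncurry u) (x, t)‖ := by
  have h := (fderiv ℝ (uncurry u) (x, t)).le_opNorm (1, 0)
  rwa [fderiv_apply_one_zero hu, Prod.norm_def, norm_one, norm_zero, max_eq_left zero_le_one,
    mul_one, Real.norm_eq_abs] at h

end PartialDerivatives

section DoubleIntegrals

variable {f h : ℝ → ℝ → ℝ} {a b c d : ℝ}

lemma intervalIntegrable_integral_of_continuous (hf : Continuous (uncurry f)) :
    IntervalIntegrable (fun t => ∫ x in a..b, f x t) volume c d :=
  (continuous_parametric_intervalIntegral_of_continuous' (f := fun t x => f x t)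
    (hf.comp continuous_swap) a b).intervalIntegrable c d

lemma integral2_add (hf : Continuous (uncurry f)) (hh : Continuous (uncurry h)) :
    ∫ t in c..d, ∫ x in a..b, (f x t + h x t) =
      (∫ t in c..d, ∫ x in a..b, f x t) + ∫ t in c..d, ∫ x in a..b, h x t := by
  have hf' (t : ℝ) : Continuous fun x => f x t := hf.comp (continuous_id.prodMk continuous_const)
  have hh' (t : ℝ) : Continuous fun x => h x t := hh.comp (continuous_id.prodMk continuous_const)
  simp only [integral_add ((hf' _).intervalIntegrable a b) ((hh' _).intervalIntegrable a b)]
  exact integral_add (intervalIntegrable_integral_of_continuous hf)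
    (intervalIntegrable_integral_of_continuous hh)

lemma integral2_sub (hf : Continuous (uncurry f)) (hh : Continuous (uncurry h)) :
    ∫ t in c..d, ∫ x in a..b, (f x t - h x t) =
      (∫ t in c..d, ∫ x in a..b, f x t) - ∫ t in c..d, ∫ x in a..b, h x t := by
  have hh' : Continuous (uncurry fun x t => -h x t) := hh.neg
  simp only [sub_eq_add_neg, integral2_add hf hh', intervalIntegral.integral_neg]

lemma integral2_mono (hab : a ≤ b) (hcd : c ≤ d) (hf : Continuous (uncurry f))
    (hh : Continuous (uncurry h)) (hle : ∀ x ∈ Icc a b, ∀ t ∈ Icc c d, f x t ≤ h x t) :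
    ∫ t in c..d, ∫ x in a..b, f x t ≤ ∫ t in c..d, ∫ x in a..b, h x t :=
  integral_mono_on hcd (intervalIntegrable_integral_of_continuous hf)
    (intervalIntegrable_integral_of_continuous hh) fun t ht =>
      integral_mono_on hab
        ((hf.comp (continuous_id.prodMk continuous_const)).intervalIntegrable _ _)
        ((hh.comp (continuous_id.prodMk continuous_const)).intervalIntegrable _ _)
        fun x hx => hle x hx t ht

theorem integral2_divergence_of_contDiff {P Φ : ℝ → ℝ → ℝ} (hP : ContDiff ℝ 1 (uncurry P))
    (hΦ : ContDiff ℝ 1 (uncurry Φ)) :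
    ∫ t in c..d, ∫ x in a..b, (partialSnd P x t + partialFst Φ x t) =
      (∫ x in a..b, P x d) - (∫ x in a..b, P x c) +
        ((∫ t in c..d, Φ b t) - ∫ t in c..d, Φ a t) := by
  set f : ℝ × ℝ → ℝ := fun q => P q.2 q.1
  set g : ℝ × ℝ → ℝ := fun q => Φ q.2 q.1
  have hf : ContDiff ℝ 1 f := hP.comp (contDiff_snd.prodMk contDiff_fst)
  have hg : ContDiff ℝ 1 g := hΦ.comp (contDiff_snd.prodMk contDiff_fst)
  have hdf := hf.differentiable one_ne_zero
  have hdg := hg.differentiable one_ne_zero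
  have key := integral2_divergence_prod_of_hasFDerivAt f g (fderiv ℝ f) (fderiv ℝ g) c a d b
    hf.continuous.continuousOn hg.continuous.continuousOn
    (fun q _ => (hdf q).hasFDerivAt) (fun q _ => (hdg q).hasFDerivAt)
    ((((hf.continuous_fderiv one_ne_zero).clm_apply continuous_const).add
      ((hg.continuous_fderiv one_ne_zero).clm_apply continuous_const)).continuousOn
        |>.integrableOn_compact (isCompact_uIcc.prod isCompact_uIcc))
  have hpartial (t x : ℝ) : fderiv ℝ f (t, x) (1, 0) + fderiv ℝ g (t, x) (0, 1) =
      partialSnd P x t + partialFst Φ x t := by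
    rw [fderiv_apply_one_zero (hdf _), fderiv_apply_zero_one (hdg _)]
    rfl
  simp only [hpartial] at key
  rw [key]
  ring

end DoubleIntegrals

section Weight

variable {T c lam t : ℝ}

def carlemanRate (T c lam t : ℝ) : ℝ := lam * (T - t + c) ^ (lam - 1)

lemma hasDerivAt_carlemanWeight (hlam : 1 ≤ lam) :
    HasDerivAt (carlemanWeight T c lam)
      (-(carlemanRate T c lam t * carlemanWeight T c lam t)) t := by
  have hb : HasDerivAt (fun s => T - s + c) (-1) t :=
    ((hasDerivAt_id t).const_sub T).add_const c
  refine (((Real.hasDerivAt_rpow_const (Or.inr hlam)).comp t hb).exp).congr_deriv ?_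
  simp only [carlemanWeight, carlemanRate, comp_apply]
  ring

lemma hasDerivAt_carlemanRate (hlam : 2 ≤ lam) :
    HasDerivAt (carlemanRate T c lam) (-(lam * (lam - 1) * (T - t + c) ^ (lam - 2))) t := by
  have hb : HasDerivAt (fun s => T - s + c) (-1) t :=
    ((hasDerivAt_id t).const_sub T).add_const c
  refine (((Real.hasDerivAt_rpow_const (p := lam - 1) (Or.inr (by linarith))).comp t hb).const_mul
    lam).congr_deriv ?_
  rw [show lam - 1 - 1 = lam - 2 by ring]
  ring

lemma contDiff_carlemanWeight (hlam : 1 ≤ lam) : ContDiff ℝ 1 (carlemanWeight T c lam) :=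
  Real.contDiff_exp.comp
    ((Real.contDiff_rpow_const_of_le (n := 1) (by exact_mod_cast hlam)).comp (by fun_prop))

lemma contDiff_carlemanRate (hlam : 2 ≤ lam) : ContDiff ℝ 1 (carlemanRate T c lam) :=
  contDiff_const.mul
    ((Real.contDiff_rpow_const_of_le (n := 1) (by push_cast; linarith)).comp (by fun_prop))

lemma carlemanRate_nonneg (hlam : 0 ≤ lam) (ht : t ≤ T + c) : 0 ≤ carlemanRate T c lam t :=
  mul_nonneg hlam (Real.rpow_nonneg (by linarith) _)

lemma mul_rpow_le_carlemanRate (hlam : 1 ≤ lam) (hc : 0 ≤ c) (ht : t ≤ T) :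
    lam * c ^ (lam - 1) ≤ carlemanRate T c lam t :=
  mul_le_mul_of_nonneg_left (Real.rpow_le_rpow hc (by linarith) (by linarith)) (by linarith)

lemma carlemanRate_le (hlam : 1 ≤ lam) (hTc : 1 ≤ T + c) (ht₀ : 0 ≤ t) (ht : t ≤ T + c) :
    carlemanRate T c lam t ≤ lam * (T + c) ^ lam := by
  have hmono : (T - t + c) ^ (lam - 1) ≤ (T + c) ^ (lam - 1) :=
    Real.rpow_le_rpow (by linarith) (by linarith) (by linarith)
  have hexp : (T + c) ^ (lam - 1) ≤ (T + c) ^ lam :=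
    Real.rpow_le_rpow_of_exponent_le hTc (by linarith)
  exact mul_le_mul_of_nonneg_left (hmono.trans hexp) (by linarith)

lemma carlemanWeight_zero_sq :
    carlemanWeight T c lam 0 ^ 2 = Real.exp (2 * (T + c) ^ lam) := by
  rw [carlemanWeight, ← Real.exp_nat_mul, sub_zero]
  norm_num

end Weight

def timeFlux (T c lam : ℝ) (u : ℝ → ℝ → ℝ) (x t : ℝ) : ℝ :=
  carlemanRate T c lam t * carlemanWeight T c lam t ^ 2 * u x t ^ 2

def spaceFlux (T c lam : ℝ) (u v g : ℝ → ℝ → ℝ) (x t : ℝ) : ℝ :=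
  2 * carlemanRate T c lam t * carlemanWeight T c lam t ^ 2 *
    (u x t * g x t * partialFst v x t - u x t * partialFst u x t)

section Fluxes

variable {T c lam : ℝ} {u v g : ℝ → ℝ → ℝ} {x t : ℝ}

lemma contDiff_timeFlux (hlam : 2 ≤ lam) (hu : ContDiff ℝ 1 (uncurry u)) :
    ContDiff ℝ 1 (uncurry (timeFlux T c lam u)) := by
  have hA := contDiff_carlemanRate (T := T) (c := c) hlam
  have hφ := contDiff_carlemanWeight (T := T) (c := c) (lam := lam) (by linarith)
  unfold timeFlux
  fun_prop

lemma contDiff_spaceFlux (hlam : 2 ≤ lam) (hu : ContDiff ℝ 2 (uncurry u))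
    (hv : ContDiff ℝ 2 (uncurry v)) (hg : ContDiff ℝ 1 (uncurry g)) :
    ContDiff ℝ 1 (uncurry (spaceFlux T c lam u v g)) := by
  have hA := contDiff_carlemanRate (T := T) (c := c) hlam
  have hφ := contDiff_carlemanWeight (T := T) (c := c) (lam := lam) (by linarith)
  have hu₁ : ContDiff ℝ 1 (uncurry u) := hu.of_le (by norm_num)
  have hux := contDiff_partialFst (m := 1) (by norm_num) hu
  have hvx := contDiff_partialFst (m := 1) (by norm_num) hv
  unfold spaceFlux
  fun_prop

lemma partialSnd_timeFlux (hlam : 2 ≤ lam) (hu : Differentiable ℝ (uncurry u)) :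
    partialSnd (timeFlux T c lam u) x t =
      (-(lam * (lam - 1) * (T - t + c) ^ (lam - 2)) - 2 * carlemanRate T c lam t ^ 2) *
          carlemanWeight T c lam t ^ 2 * u x t ^ 2 +
        2 * carlemanRate T c lam t * carlemanWeight T c lam t ^ 2 *
          (u x t * partialSnd u x t) := by
  have hA := hasDerivAt_carlemanRate (T := T) (c := c) (t := t) hlam
  have hφ := hasDerivAt_carlemanWeight (T := T) (c := c) (t := t) (by linarith : 1 ≤ lam)
  refine ((hA.mul (hφ.pow 2)).mul ((hasDerivAt_partialSnd (hu (x, t))).pow 2)).deriv.trans ?_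
  simp only [Pi.mul_apply, Pi.pow_apply]
  ring

lemma partialFst_spaceFlux (hu : ContDiff ℝ 2 (uncurry u)) (hv : ContDiff ℝ 2 (uncurry v))
    (hg : Differentiable ℝ (uncurry g)) :
    partialFst (spaceFlux T c lam u v g) x t =
      2 * carlemanRate T c lam t * carlemanWeight T c lam t ^ 2 *
        (partialFst u x t * g x t * partialFst v x t +
          u x t * partialFst g x t * partialFst v x t +
          u x t * g x t * partialFst (partialFst v) x t - partialFst u x t ^ 2 -
          u x t * partialFst (partialFst u) x t) := by
  have hdiff {w : ℝ → ℝ → ℝ} (hw : ContDiff ℝ 2 (uncurry w)) (p : ℝ × ℝ) :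
      DifferentiableAt ℝ (uncurry w) p ∧ DifferentiableAt ℝ (uncurry (partialFst w)) p :=
    ⟨hw.differentiable (by norm_num) p,
      (contDiff_partialFst (m := 1) (by norm_num) hw).differentiable one_ne_zero p⟩
  have hu' := hasDerivAt_partialFst (hdiff hu (x, t)).1
  have hux' := hasDerivAt_partialFst (hdiff hu (x, t)).2
  have hvx' := hasDerivAt_partialFst (hdiff hv (x, t)).2
  have hg' := hasDerivAt_partialFst (hg (x, t))
  refine ((((hu'.mul hg').mul hvx').sub (hu'.mul hux')).const_mul
    (2 * carlemanRate T c lam t * carlemanWeight T c lam t ^ 2)).deriv.trans ?_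
  simp only [Pi.mul_apply]
  ring

lemma spaceFlux_eq_zero (hu : partialFst u x t = 0) (hv : partialFst v x t = 0) :
    spaceFlux T c lam u v g x t = 0 := by
  simp [spaceFlux, hu, hv]

end Fluxes

lemma carleman_pointwise_algebra {A A' W G m k K g gx u ux ut uxx vx vxx : ℝ} (hW : 0 ≤ W)
    (hA : 0 ≤ A) (hA' : A' ≤ 0) (hg : |g| ≤ G) (hgx : |gx| ≤ G) (hm : m ≤ A) (hk : k ≤ A ^ 2 / 2)
    (hK : G ^ 2 * A + 2 * G ^ 2 ≤ K) :
    (A' - 2 * A ^ 2) * W * u ^ 2 + 2 * A * W * (u * ut) +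
        2 * A * W * (ux * g * vx + u * gx * vx + u * g * vxx - ux ^ 2 - u * uxx) +
        (m * (ux ^ 2 * W) + k * (u ^ 2 * W) - K * (vx ^ 2 * W)) ≤
      (ut - uxx + g * vxx) ^ 2 * W := by
  have hg2 : g ^ 2 ≤ G ^ 2 := sq_le_sq' (abs_le.mp hg).1 (abs_le.mp hg).2
  have hgx2 : gx ^ 2 ≤ G ^ 2 := sq_le_sq' (abs_le.mp hgx).1 (abs_le.mp hgx).2
  have hux2W := mul_nonneg (sq_nonneg ux) hW
  have hu2W := mul_nonneg (sq_nonneg u) hW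
  have hvx2W := mul_nonneg (sq_nonneg vx) hW
  -- `(L - A u)² W ≥ 0` together with Young's inequality on the two cross terms
  have hsq := mul_nonneg (sq_nonneg (ut - uxx + g * vxx - A * u)) hW
  have hyoung₁ := mul_nonneg (mul_nonneg hA hW) (sq_nonneg (ux - g * vx))
  have hyoung₂ := mul_nonneg hW (sq_nonneg (A * u - 2 * gx * vx))
  linarith [mul_le_mul_of_nonneg_right hm hux2W, mul_le_mul_of_nonneg_right hk hu2W,
    mul_le_mul_of_nonneg_right hK hvx2W, mul_nonpos_of_nonpos_of_nonneg hA' hu2W,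
    mul_le_mul_of_nonneg_left hg2 (mul_nonneg hA hvx2W),
    mul_le_mul_of_nonneg_left hgx2 hvx2W]

section Estimate

variable {T c lam G : ℝ} {u v g : ℝ → ℝ → ℝ}

lemma carleman_pointwise (hlam : 2 ≤ lam) (hc : 0 ≤ c) (hTc : 1 ≤ T + c) {x t : ℝ}
    (ht : t ∈ Icc 0 T) (hu : ContDiff ℝ 2 (uncurry u)) (hv : ContDiff ℝ 2 (uncurry v))
    (hg : Differentiable ℝ (uncurry g)) (hgG : |g x t| ≤ G) (hgxG : |partialFst g x t| ≤ G) :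
    partialSnd (timeFlux T c lam u) x t + partialFst (spaceFlux T c lam u v g) x t +
        (lam * c ^ (lam - 1) * (partialFst u x t ^ 2 * carlemanWeight T c lam t ^ 2) +
          lam ^ 2 / 4 * c ^ (2 * lam - 2) * (u x t ^ 2 * carlemanWeight T c lam t ^ 2) -
          (3 * G ^ 2 + 1) * lam * (T + c) ^ lam *
            (partialFst v x t ^ 2 * carlemanWeight T c lam t ^ 2)) ≤
      (partialSnd u x t - partialFst (partialFst u) x t +
          g x t * partialFst (partialFst v) x t) ^ 2 * carlemanWeight T c lam t ^ 2 := by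
  rw [partialSnd_timeFlux hlam (hu.differentiable (by norm_num)), partialFst_spaceFlux hu hv hg]
  set A := carlemanRate T c lam t
  have hA : 0 ≤ A := carlemanRate_nonneg (by linarith) (by linarith [ht.2])
  have hm : lam * c ^ (lam - 1) ≤ A := mul_rpow_le_carlemanRate (by linarith) hc ht.2
  have hM : A ≤ lam * (T + c) ^ lam :=
    carlemanRate_le (by linarith) hTc ht.1 (by linarith [ht.2])
  have hM₁ : 1 ≤ lam * (T + c) ^ lam :=
    one_le_mul_of_one_le_of_one_le (by linarith) (Real.one_le_rpow hTc (by linarith))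
  have hk : lam ^ 2 / 4 * c ^ (2 * lam - 2) ≤ A ^ 2 / 2 := by
    have hsq : (c ^ (lam - 1)) ^ 2 = c ^ (2 * lam - 2) := by
      rw [← Real.rpow_natCast, ← Real.rpow_mul hc]
      ring_nf
    have := pow_le_pow_left₀ (mul_nonneg (by linarith) (Real.rpow_nonneg hc _)) hm 2
    nlinarith
  have hK : G ^ 2 * A + 2 * G ^ 2 ≤ (3 * G ^ 2 + 1) * lam * (T + c) ^ lam := by
    nlinarith [sq_nonneg G]
  have hA' : -(lam * (lam - 1) * (T - t + c) ^ (lam - 2)) ≤ 0 :=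
    neg_nonpos.mpr (mul_nonneg (by nlinarith) (Real.rpow_nonneg (by linarith [ht.2]) _))
  exact carleman_pointwise_algebra (sq_nonneg _) hA hA' hgG hgxG hm hk hK

lemma neg_le_integral_timeFlux_sub (hlam : 1 ≤ lam) (hc : 0 ≤ c) (hTc : 1 ≤ T + c)
    {C a b : ℝ} (hC : 1 ≤ C) (hab : a ≤ b) :
    -(C * lam * (T + c) ^ lam * Real.exp (2 * (T + c) ^ lam) * ∫ x in a..b, u x 0 ^ 2) ≤
      (∫ x in a..b, timeFlux T c lam u x T) - ∫ x in a..b, timeFlux T c lam u x 0 := by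
  have hfinal : 0 ≤ ∫ x in a..b, timeFlux T c lam u x T :=
    integral_nonneg hab fun x _ =>
      mul_nonneg (mul_nonneg (carlemanRate_nonneg (by linarith) (by linarith)) (sq_nonneg _))
        (sq_nonneg _)
  have hinitial : ∫ x in a..b, timeFlux T c lam u x 0 =
      carlemanRate T c lam 0 * Real.exp (2 * (T + c) ^ lam) * ∫ x in a..b, u x 0 ^ 2 := by
    simp only [timeFlux, intervalIntegral.integral_const_mul, carlemanWeight_zero_sq]
  have hrate : carlemanRate T c lam 0 ≤ C * lam * (T + c) ^ lam := by
    rw [mul_assoc]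
    exact (carlemanRate_le hlam hTc le_rfl (by linarith)).trans <| le_mul_of_one_le_left
      (mul_nonneg (by linarith) (Real.rpow_nonneg (by linarith) _)) hC
  have hu0 : 0 ≤ ∫ x in a..b, u x 0 ^ 2 := integral_nonneg hab fun x _ => sq_nonneg _
  rw [hinitial]
  linarith [mul_le_mul_of_nonneg_right hrate
    (mul_nonneg (Real.exp_pos (2 * (T + c) ^ lam)).le hu0)]

theorem quasiCarleman_estimate (hT : 0 ≤ T) (hc : 1 ≤ c) (hlam : 2 ≤ lam)
    (hg : ContDiff ℝ 1 (uncurry g))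
    (hgG : ∀ x ∈ Icc (0 : ℝ) 1, ∀ t ∈ Icc 0 T, |g x t| ≤ G ∧ |partialFst g x t| ≤ G)
    (hu : ContDiff ℝ 2 (uncurry u)) (hv : ContDiff ℝ 2 (uncurry v))
    (hbc : ∀ t ∈ Icc 0 T, partialFst u 0 t = 0 ∧ partialFst u 1 t = 0 ∧
      partialFst v 0 t = 0 ∧ partialFst v 1 t = 0) :
    lam * c ^ (lam - 1) *
        (∫ t in (0 : ℝ)..T, ∫ x in (0 : ℝ)..1,
          partialFst u x t ^ 2 * carlemanWeight T c lam t ^ 2)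
      + lam ^ 2 / 4 * c ^ (2 * lam - 2) *
        (∫ t in (0 : ℝ)..T, ∫ x in (0 : ℝ)..1, u x t ^ 2 * carlemanWeight T c lam t ^ 2)
      - (3 * G ^ 2 + 1) * lam * (T + c) ^ lam *
        (∫ t in (0 : ℝ)..T, ∫ x in (0 : ℝ)..1,
          partialFst v x t ^ 2 * carlemanWeight T c lam t ^ 2)
      - (3 * G ^ 2 + 1) * lam * (T + c) ^ lam * Real.exp (2 * (T + c) ^ lam) *
        (∫ x in (0 : ℝ)..1, u x 0 ^ 2)
    ≤ ∫ t in (0 : ℝ)..T, ∫ x in (0 : ℝ)..1,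
        (partialSnd u x t - partialFst (partialFst u) x t +
            g x t * partialFst (partialFst v) x t) ^ 2 * carlemanWeight T c lam t ^ 2 := by
  have hu₁ : ContDiff ℝ 1 (uncurry u) := hu.of_le (by norm_num)
  have hux := contDiff_partialFst (m := 1) (by norm_num) hu
  have hvx := contDiff_partialFst (m := 1) (by norm_num) hv
  have hP := contDiff_timeFlux (T := T) (c := c) hlam hu₁
  have hΦ := contDiff_spaceFlux (T := T) (c := c) hlam hu hv hg
  have cφ := (contDiff_carlemanWeight (T := T) (c := c) (lam := lam) (by linarith)).continuous
  have cu := hu.continuous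
  have cg := hg.continuous
  have cux := hux.continuous
  have cvx := hvx.continuous
  have cuxx := (contDiff_partialFst (m := 0) (by norm_num) hux).continuous
  have cvxx := (contDiff_partialFst (m := 0) (by norm_num) hvx).continuous
  have cut := (contDiff_partialSnd (m := 0) (by norm_num) hu₁).continuous
  have cPt := (contDiff_partialSnd (m := 0) (by norm_num) hP).continuous
  have cΦx := (contDiff_partialFst (m := 0) (by norm_num) hΦ).continuous
  have hdiv : ∫ t in (0 : ℝ)..T, ∫ x in (0 : ℝ)..1,
      (partialSnd (timeFlux T c lam u) x t + partialFst (spaceFlux T c lam u v g) x t) =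
      (∫ x in (0 : ℝ)..1, timeFlux T c lam u x T) -
        ∫ x in (0 : ℝ)..1, timeFlux T c lam u x 0 := by
    have hflux (y : ℝ) (hy : ∀ t ∈ Icc 0 T, partialFst u y t = 0 ∧ partialFst v y t = 0) :
        ∫ t in (0 : ℝ)..T, spaceFlux T c lam u v g y t = 0 := by
      refine (integral_congr fun t ht => ?_).trans integral_zero
      rw [uIcc_of_le hT] at ht
      exact spaceFlux_eq_zero (hy t ht).1 (hy t ht).2
    rw [integral2_divergence_of_contDiff hP hΦ,
      hflux 0 fun t ht => ⟨(hbc t ht).1, (hbc t ht).2.2.1⟩,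
      hflux 1 fun t ht => ⟨(hbc t ht).2.1, (hbc t ht).2.2.2⟩, sub_zero, add_zero]
  have hmono := integral2_mono zero_le_one hT (by fun_prop) (by fun_prop) fun x hx t ht =>
    carleman_pointwise (T := T) (c := c) hlam (by linarith) (by linarith) ht hu hv
      (hg.differentiable one_ne_zero) (hgG x hx t ht).1 (hgG x hx t ht).2
  rw [integral2_add (by fun_prop) (by fun_prop), hdiv, integral2_sub (by fun_prop) (by fun_prop),
    integral2_add (by fun_prop) (by fun_prop)] at hmono
  simp only [intervalIntegral.integral_const_mul] at hmono
  linarith [neg_le_integral_timeFlux_sub (T := T) (c := c) (lam := lam) (u := u) (by linarith)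
    (by linarith) (by linarith) (by nlinarith [sq_nonneg G] : 1 ≤ 3 * G ^ 2 + 1) zero_le_one]

end Estimate

end

theorem stmt2_general (T c G : ℝ) (hT : 0 < T) (hc : 1 + Real.sqrt (1 + 2 * T) ≤ c) :
    ∃ lam0 C2 : ℝ, 1 ≤ lam0 ∧ 0 < C2 ∧
      ∀ g : ℝ → ℝ → ℝ,
        ContDiff ℝ 1 (fun p : ℝ × ℝ => g p.1 p.2) →
        (∀ x ∈ Set.Icc (0 : ℝ) 1, ∀ t ∈ Set.Icc (0 : ℝ) T,
          |g x t| ≤ G ∧ ‖fderiv ℝ (fun p : ℝ × ℝ => g p.1 p.2) (x, t)‖ ≤ G) →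
        ∀ lam : ℝ, lam0 ≤ lam →
          ∀ u v : ℝ → ℝ → ℝ,
            ContDiff ℝ 2 (fun p : ℝ × ℝ => u p.1 p.2) →
            ContDiff ℝ 2 (fun p : ℝ × ℝ => v p.1 p.2) →
            (∀ t ∈ Set.Icc (0 : ℝ) T,
              deriv (fun x => u x t) 0 = 0 ∧ deriv (fun x => u x t) 1 = 0 ∧
              deriv (fun x => v x t) 0 = 0 ∧ deriv (fun x => v x t) 1 = 0) →
            lam * c ^ (lam - 1) *
                (∫ t in (0 : ℝ)..T, ∫ x in (0 : ℝ)..1,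
                  (deriv (fun y => u y t) x) ^ 2 * (carlemanWeight T c lam t) ^ 2)
              + lam ^ 2 / 4 * c ^ (2 * lam - 2) *
                (∫ t in (0 : ℝ)..T, ∫ x in (0 : ℝ)..1,
                  (u x t) ^ 2 * (carlemanWeight T c lam t) ^ 2)
              - C2 * lam * (T + c) ^ lam *
                (∫ t in (0 : ℝ)..T, ∫ x in (0 : ℝ)..1,
                  (deriv (fun y => v y t) x) ^ 2 * (carlemanWeight T c lam t) ^ 2)
              - C2 * lam * (T + c) ^ lam * Real.exp (2 * (T + c) ^ lam) *
                (∫ x in (0 : ℝ)..1, (u x 0) ^ 2)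
            ≤ ∫ t in (0 : ℝ)..T, ∫ x in (0 : ℝ)..1,
                (deriv (fun s => u x s) t - deriv (fun y => deriv (fun z => u z t) y) x
                    + g x t * deriv (fun y => deriv (fun z => v z t) y) x) ^ 2
                  * (carlemanWeight T c lam t) ^ 2 := by
  have hc₁ : 1 ≤ c := by linarith [Real.sqrt_nonneg (1 + 2 * T)]
  -- `λ ≥ 2` makes `carlemanRate` a `C¹` function of `t`; `3 G² + 1` comes from Young's inequality.
  refine ⟨2, 3 * G ^ 2 + 1, one_le_two, by positivity,
    fun g hg hgG lam hlam u v hu hv hbc => ?_⟩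
  have hgG' (x : ℝ) (hx : x ∈ Icc 0 1) (t : ℝ) (ht : t ∈ Icc 0 T) :
      |g x t| ≤ G ∧ |partialFst g x t| ≤ G :=
    ⟨(hgG x hx t ht).1,
      (abs_partialFst_le_norm_fderiv (hg.differentiable one_ne_zero _)).trans (hgG x hx t ht).2⟩
  exact quasiCarleman_estimate hT.le hc₁ hlam hg hgG' hu hv hbc

/-- One-dimensional quasi-Carleman estimate for the operator `∂ₜ − ∂ₓₓ + g ∂ₓₓ` on
`(0,1) × (0,T)` with zero Neumann boundary conditions, where `g` is `C¹` with `|g|`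
and its first derivatives bounded by `G`. -/
theorem stmt2 (T c G : ℝ) (hT : 0 < T) (hc : 1 + Real.sqrt (1 + 2 * T) ≤ c) (hG : 0 < G) :
    ∃ lam0 C2 : ℝ, 1 ≤ lam0 ∧ 0 < C2 ∧
      ∀ g : ℝ → ℝ → ℝ,
        ContDiff ℝ 1 (fun p : ℝ × ℝ => g p.1 p.2) →
        (∀ x ∈ Set.Icc (0 : ℝ) 1, ∀ t ∈ Set.Icc (0 : ℝ) T,
          |g x t| ≤ G ∧ ‖fderiv ℝ (fun p : ℝ × ℝ => g p.1 p.2) (x, t)‖ ≤ G) →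
        ∀ lam : ℝ, lam0 ≤ lam →
          ∀ u v : ℝ → ℝ → ℝ,
            ContDiff ℝ 2 (fun p : ℝ × ℝ => u p.1 p.2) →
            ContDiff ℝ 2 (fun p : ℝ × ℝ => v p.1 p.2) →
            (∀ t ∈ Set.Icc (0 : ℝ) T,
              deriv (fun x => u x t) 0 = 0 ∧ deriv (fun x => u x t) 1 = 0 ∧
              deriv (fun x => v x t) 0 = 0 ∧ deriv (fun x => v x t) 1 = 0) →
            lam * c ^ (lam - 1) *
                (∫ t in (0 : ℝ)..T, ∫ x in (0 : ℝ)..1,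
                  (deriv (fun y => u y t) x) ^ 2 * (carlemanWeight T c lam t) ^ 2)
              + lam ^ 2 / 4 * c ^ (2 * lam - 2) *
                (∫ t in (0 : ℝ)..T, ∫ x in (0 : ℝ)..1,
                  (u x t) ^ 2 * (carlemanWeight T c lam t) ^ 2)
              - C2 * lam * (T + c) ^ lam *
                (∫ t in (0 : ℝ)..T, ∫ x in (0 : ℝ)..1,
                  (deriv (fun y => v y t) x) ^ 2 * (carlemanWeight T c lam t) ^ 2)
              - C2 * lam * (T + c) ^ lam * Real.exp (2 * (T + c) ^ lam) *
                (∫ x in (0 : ℝ)..1, (u x 0) ^ 2)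
            ≤ ∫ t in (0 : ℝ)..T, ∫ x in (0 : ℝ)..1,
                (deriv (fun s => u x s) t - deriv (fun y => deriv (fun z => u z t) y) x
                    + g x t * deriv (fun y => deriv (fun z => v z t) y) x) ^ 2
                  * (carlemanWeight T c lam t) ^ 2 :=
  stmt2_general T c G hT hc
end

section
/- Let M, M' > 0 and let r : ℝⁿ × ℝ → ℝ be C¹ in x with |r| ≤ M and |∇ₓr| ≤ M. Let u, m : ℝⁿ × ℝ → ℝ be of class C² in x and C¹ in t with |∇u(x,t)| ≤ M', |Δu(x,t)| ≤ M', |m(x,t)| ≤ M', and |∇m(x,t)| ≤ M' for all (x,t). Let 0 < δ ≤ 1 and let e₁, e₂ : ℝⁿ → ℝ be time-independent C² functions with |e₂(x)| ≤ δ, |∇e₁(x)| ≤ δ, |∇e₂(x)| ≤ δ, |Δe₁(x)| ≤ δ, and |Δe₂(x)| ≤ δ for all x. Then for every (x,t), |L₂(u + e₁, m + e₂)(x,t) − L₂(u,m)(x,t)| ≤ (1 + 6 M M' + 3 M) δ, where L₂(u,m)(x,t) = ∂ₜm − Δm − div(r m ∇u). -/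
/-!
Since `e₂` does not depend on time, `∂ₜ` does not see it, and `Δ` is additive, so the difference
is `-Δe₂` minus the divergence of `r (m + e₂) ∇(u + e₁) - r m ∇u`, a sum of three fields `r g ∇w`
each carrying at least one factor of size `δ`. The product rule
`div (f g ∇w) = f ⟪∇g, ∇w⟫ + g ⟪∇f, ∇w⟫ + f g Δw` bounds each of them by `3 A B C` in terms of
bounds `A`, `B`, `C` on `f`, `g`, `w` and their derivatives; the term with two factors `δ` is
absorbed using `δ² ≤ δ`.
-/

open MeasureTheory

/-- The Laplacian of `f : ℝⁿ → ℝ`, defined as the sum of the pure second partial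
derivatives in the coordinate directions. -/
noncomputable def lap {n : ℕ} (f : EuclideanSpace ℝ (Fin n) → ℝ)
    (x : EuclideanSpace ℝ (Fin n)) : ℝ :=
  ∑ i, iteratedFDeriv ℝ 2 f x ![EuclideanSpace.single i 1, EuclideanSpace.single i 1]

/-- The divergence of a vector field `F : ℝⁿ → ℝⁿ`. -/
noncomputable def diverg {n : ℕ}
    (F : EuclideanSpace ℝ (Fin n) → EuclideanSpace ℝ (Fin n))
    (x : EuclideanSpace ℝ (Fin n)) : ℝ :=
  ∑ i, fderiv ℝ (fun y => F y i) x (EuclideanSpace.single i 1)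

/-- The operator `L₂` of the second (Fokker–Planck) equation of the MFG system:
`L₂(u,m)(x,t) = ∂ₜm − Δm − div(r m ∇u)`. -/
noncomputable def L2 {n : ℕ} (r : EuclideanSpace ℝ (Fin n) → ℝ → ℝ)
    (u m : EuclideanSpace ℝ (Fin n) → ℝ → ℝ)
    (x : EuclideanSpace ℝ (Fin n)) (t : ℝ) : ℝ :=
  deriv (fun s => m x s) t - lap (fun y => m y t) x
    - diverg (fun y => (r y t * m y t) • gradient (fun z => u z t) y) x

open InnerProductSpace Laplacian

section

variable {n : ℕ} {x : EuclideanSpace ℝ (Fin n)}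

local notation "E" => EuclideanSpace ℝ (Fin n)

theorem lap_eq_laplacian (f : E → ℝ) : lap f = Δ f := by
  ext y
  simp [lap, laplacian_eq_iteratedFDeriv_orthonormalBasis f (EuclideanSpace.basisFun (Fin n) ℝ)]

theorem lap_fun_add {f g : E → ℝ} (hf : ContDiffAt ℝ 2 f x) (hg : ContDiffAt ℝ 2 g x) :
    lap (fun y => f y + g y) x = lap f x + lap g x := by
  simp only [lap_eq_laplacian]
  exact hf.laplacian_add hg

theorem toDual_symm_apply_ofLp (φ : StrongDual ℝ E) (i : Fin n) :
    (toDual ℝ E).symm φ i = φ (EuclideanSpace.single i 1) := by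
  rw [← toDual_symm_apply, EuclideanSpace.inner_single_right]
  simp

theorem gradient_fun_add {f g : E → ℝ} {y : E} (hf : DifferentiableAt ℝ f y)
    (hg : DifferentiableAt ℝ g y) :
    gradient (fun z => f z + g z) y = gradient f y + gradient g y := by
  simp [gradient, fderiv_fun_add hf hg]

theorem ContDiffAt.differentiableAt_gradient {w : E → ℝ} (hw : ContDiffAt ℝ 2 w x) :
    DifferentiableAt ℝ (gradient w) x :=
  (toDual ℝ E).symm.differentiableAt.comp x
    ((hw.fderiv_right (m := 1) le_rfl).differentiableAt one_ne_zero)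

theorem diverg_eq_sum_fderiv_apply {F : E → E} (hF : DifferentiableAt ℝ F x) :
    diverg F x = ∑ i, fderiv ℝ F x (EuclideanSpace.single i 1) i := by
  refine Finset.sum_congr rfl fun i _ => ?_
  change fderiv ℝ (EuclideanSpace.proj i ∘ F) x _ = _
  rw [((EuclideanSpace.proj i).hasFDerivAt.comp x hF.hasFDerivAt).fderiv]
  rfl

theorem diverg_fun_add {F G : E → E} (hF : DifferentiableAt ℝ F x)
    (hG : DifferentiableAt ℝ G x) :
    diverg (fun y => F y + G y) x = diverg F x + diverg G x := by
  rw [diverg_eq_sum_fderiv_apply (hF.fun_add hG), diverg_eq_sum_fderiv_apply hF,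
    diverg_eq_sum_fderiv_apply hG, fderiv_fun_add hF hG, ← Finset.sum_add_distrib]
  rfl

theorem diverg_fun_smul {f : E → ℝ} {G : E → E} (hf : DifferentiableAt ℝ f x)
    (hG : DifferentiableAt ℝ G x) :
    diverg (fun y => f y • G y) x = fderiv ℝ f x (G x) + f x * diverg G x := by
  rw [diverg_eq_sum_fderiv_apply (hf.fun_smul hG), diverg_eq_sum_fderiv_apply hG,
    fderiv_fun_smul hf hG, Finset.mul_sum]
  have hcoord : fderiv ℝ f x (G x) = ∑ i, G x i * fderiv ℝ f x (EuclideanSpace.single i 1) := by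
    conv_lhs => rw [← (EuclideanSpace.basisFun (Fin n) ℝ).sum_repr (G x)]
    simp
  simp [hcoord, Finset.sum_add_distrib, mul_comm, add_comm]

theorem diverg_gradient {w : E → ℝ} (hw : ContDiffAt ℝ 2 w x) :
    diverg (gradient w) x = lap w x := by
  rw [diverg_eq_sum_fderiv_apply hw.differentiableAt_gradient]
  refine Finset.sum_congr rfl fun i _ => ?_
  have hw' := (hw.fderiv_right (m := 1) le_rfl).differentiableAt one_ne_zero
  change fderiv ℝ ((toDual ℝ E).symm ∘ fderiv ℝ w) x _ i = _
  rw [((toDual ℝ E).symm.hasFDerivAt.comp x hw'.hasFDerivAt).fderiv, iteratedFDeriv_two_apply]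
  exact toDual_symm_apply_ofLp _ i

theorem diverg_mul_smul_gradient {f g w : E → ℝ} (hf : DifferentiableAt ℝ f x)
    (hg : DifferentiableAt ℝ g x) (hw : ContDiffAt ℝ 2 w x) :
    diverg (fun y => (f y * g y) • gradient w y) x
      = f x * ⟪gradient g x, gradient w x⟫_ℝ + g x * ⟪gradient f x, gradient w x⟫_ℝ
        + f x * g x * lap w x := by
  rw [diverg_fun_smul (hf.fun_mul hg) hw.differentiableAt_gradient, diverg_gradient hw,
    fderiv_fun_mul hf hg]
  simp only [_root_.add_apply, _root_.smul_apply, smul_eq_mul, inner_gradient_left]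

theorem abs_diverg_mul_smul_gradient_le {f g w : E → ℝ} {A B C : ℝ}
    (hf : DifferentiableAt ℝ f x) (hg : DifferentiableAt ℝ g x) (hw : ContDiffAt ℝ 2 w x)
    (hfA : |f x| ≤ A) (hf'A : ‖gradient f x‖ ≤ A) (hgB : |g x| ≤ B) (hg'B : ‖gradient g x‖ ≤ B)
    (hw'C : ‖gradient w x‖ ≤ C) (hΔwC : |lap w x| ≤ C) :
    |diverg (fun y => (f y * g y) • gradient w y) x| ≤ 3 * A * B * C := by
  have hA : 0 ≤ A := (abs_nonneg _).trans hfA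
  have hB : 0 ≤ B := (abs_nonneg _).trans hgB
  rw [diverg_mul_smul_gradient hf hg hw]
  calc _ ≤ |f x| * (‖gradient g x‖ * ‖gradient w x‖) + |g x| * (‖gradient f x‖ * ‖gradient w x‖)
          + |f x| * |g x| * |lap w x| := by
        refine (abs_add_three _ _ _).trans ?_
        simp only [abs_mul]
        gcongr <;> exact abs_real_inner_le_norm _ _
    _ ≤ A * (B * C) + B * (A * C) + A * B * C := by gcongr
    _ = 3 * A * B * C := by ring

theorem diverg_mul_add_smul_gradient_add {f g h w v : E → ℝ} (hf : DifferentiableAt ℝ f x)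
    (hg : DifferentiableAt ℝ g x) (hh : DifferentiableAt ℝ h x) (hw : ContDiff ℝ 2 w)
    (hv : ContDiff ℝ 2 v) :
    diverg (fun y => (f y * (g y + h y)) • gradient (fun z => w z + v z) y) x
      = diverg (fun y => (f y * g y) • gradient w y) x
        + diverg (fun y => (f y * g y) • gradient v y) x
        + diverg (fun y => (f y * h y) • gradient w y) x
        + diverg (fun y => (f y * h y) • gradient v y) x := by
  have hfield : (fun y => (f y * (g y + h y)) • gradient (fun z => w z + v z) y)
      = fun y => ((f y * g y) • gradient w y + (f y * g y) • gradient v y)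
        + ((f y * h y) • gradient w y + (f y * h y) • gradient v y) := by
    funext y
    rw [gradient_fun_add (hw.differentiable two_ne_zero y) (hv.differentiable two_ne_zero y),
      mul_add, add_smul, smul_add, smul_add]
  have hdiff {g w : E → ℝ} (hg : DifferentiableAt ℝ g x) (hw : ContDiff ℝ 2 w) :
      DifferentiableAt ℝ (fun y => (f y * g y) • gradient w y) x :=
    (hf.fun_mul hg).fun_smul hw.contDiffAt.differentiableAt_gradient
  rw [hfield, diverg_fun_add ((hdiff hg hw).fun_add (hdiff hg hv))
      ((hdiff hh hw).fun_add (hdiff hh hv)),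
    diverg_fun_add (hdiff hg hw) (hdiff hg hv), diverg_fun_add (hdiff hh hw) (hdiff hh hv),
    ← add_assoc]

theorem L2_add_sub_L2 {r u m : E → ℝ → ℝ} {e₁ e₂ : E → ℝ} {t : ℝ}
    (hr : DifferentiableAt ℝ (fun y => r y t) x) (hu : ContDiff ℝ 2 (fun y => u y t))
    (hm : ContDiff ℝ 2 (fun y => m y t)) (he₁ : ContDiff ℝ 2 e₁) (he₂ : ContDiff ℝ 2 e₂) :
    L2 r (fun y s => u y s + e₁ y) (fun y s => m y s + e₂ y) x t - L2 r u m x t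
      = -(lap e₂ x + (diverg (fun y => (r y t * m y t) • gradient e₁ y) x
          + diverg (fun y => (r y t * e₂ y) • gradient (fun z => u z t) y) x
          + diverg (fun y => (r y t * e₂ y) • gradient e₁ y) x)) := by
  rw [L2, L2, deriv_add_const, lap_fun_add hm.contDiffAt he₂.contDiffAt,
    diverg_mul_add_smul_gradient_add hr (hm.differentiable two_ne_zero x)
      (he₂.differentiable two_ne_zero x) hu he₁]
  ring

end

theorem stmt13_general {n : ℕ} (M M' : ℝ) (hM : 0 < M)
    (r : EuclideanSpace ℝ (Fin n) → ℝ → ℝ)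
    (hrx : ∀ t, ContDiff ℝ 1 (fun x => r x t))
    (hrbd : ∀ x t, |r x t| ≤ M)
    (hgradr : ∀ x t, ‖gradient (fun y => r y t) x‖ ≤ M)
    (u m : EuclideanSpace ℝ (Fin n) → ℝ → ℝ)
    (hux : ∀ t, ContDiff ℝ 2 (fun x => u x t))
    (hmx : ∀ t, ContDiff ℝ 2 (fun x => m x t))
    (hgradu : ∀ x t, ‖gradient (fun y => u y t) x‖ ≤ M')
    (hlapu : ∀ x t, |lap (fun y => u y t) x| ≤ M')
    (hmbd : ∀ x t, |m x t| ≤ M')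
    (hgradm : ∀ x t, ‖gradient (fun y => m y t) x‖ ≤ M')
    (δ : ℝ) (hδ0 : 0 < δ) (hδ1 : δ ≤ 1)
    (e₁ e₂ : EuclideanSpace ℝ (Fin n) → ℝ)
    (he₁ : ContDiff ℝ 2 e₁) (he₂ : ContDiff ℝ 2 e₂)
    (he₂bd : ∀ x, |e₂ x| ≤ δ)
    (hgrade₁ : ∀ x, ‖gradient e₁ x‖ ≤ δ) (hgrade₂ : ∀ x, ‖gradient e₂ x‖ ≤ δ)
    (hlape₁ : ∀ x, |lap e₁ x| ≤ δ) (hlape₂ : ∀ x, |lap e₂ x| ≤ δ) :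
    ∀ x t,
      |L2 r (fun y s => u y s + e₁ y) (fun y s => m y s + e₂ y) x t - L2 r u m x t|
        ≤ (1 + 6 * M * M' + 3 * M) * δ := by
  intro x t
  have hr := (hrx t).differentiable one_ne_zero x
  have hm := (hmx t).differentiable two_ne_zero x
  have he₂' := he₂.differentiable two_ne_zero x
  have h₁ := abs_diverg_mul_smul_gradient_le hr hm he₁.contDiffAt (hrbd x t) (hgradr x t)
    (hmbd x t) (hgradm x t) (hgrade₁ x) (hlape₁ x)
  have h₂ := abs_diverg_mul_smul_gradient_le hr he₂' (hux t).contDiffAt (hrbd x t) (hgradr x t)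
    (he₂bd x) (hgrade₂ x) (hgradu x t) (hlapu x t)
  have h₃ := abs_diverg_mul_smul_gradient_le hr he₂' he₁.contDiffAt (hrbd x t) (hgradr x t)
    (he₂bd x) (hgrade₂ x) (hgrade₁ x) (hlape₁ x)
  have hMδ : M * δ * δ ≤ M * δ := mul_le_of_le_one_right (by positivity) hδ1
  rw [L2_add_sub_L2 hr (hux t) (hmx t) he₁ he₂, abs_neg]
  calc _ ≤ |lap e₂ x| + (|diverg (fun y => (r y t * m y t) • gradient e₁ y) x|
          + |diverg (fun y => (r y t * e₂ y) • gradient (fun z => u z t) y) x|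
          + |diverg (fun y => (r y t * e₂ y) • gradient e₁ y) x|) :=
        (abs_add_le _ _).trans (by gcongr; exact abs_add_three _ _ _)
    _ ≤ (1 + 6 * M * M' + 3 * M) * δ := by linarith [hlape₂ x]

/-- Pointwise bound for the perturbation of `L₂` caused by time-independent errors
`e₁`, `e₂` in the initial data. -/
theorem stmt13 {n : ℕ} (M M' : ℝ) (hM : 0 < M) (hM' : 0 < M')
    (r : EuclideanSpace ℝ (Fin n) → ℝ → ℝ)
    (hrx : ∀ t, ContDiff ℝ 1 (fun x => r x t))
    (hrbd : ∀ x t, |r x t| ≤ M)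
    (hgradr : ∀ x t, ‖gradient (fun y => r y t) x‖ ≤ M)
    (u m : EuclideanSpace ℝ (Fin n) → ℝ → ℝ)
    (hux : ∀ t, ContDiff ℝ 2 (fun x => u x t))
    (hut : ∀ x, Differentiable ℝ (fun t => u x t))
    (hmx : ∀ t, ContDiff ℝ 2 (fun x => m x t))
    (hmt : ∀ x, Differentiable ℝ (fun t => m x t))
    (hgradu : ∀ x t, ‖gradient (fun y => u y t) x‖ ≤ M')
    (hlapu : ∀ x t, |lap (fun y => u y t) x| ≤ M')
    (hmbd : ∀ x t, |m x t| ≤ M')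
    (hgradm : ∀ x t, ‖gradient (fun y => m y t) x‖ ≤ M')
    (δ : ℝ) (hδ0 : 0 < δ) (hδ1 : δ ≤ 1)
    (e₁ e₂ : EuclideanSpace ℝ (Fin n) → ℝ)
    (he₁ : ContDiff ℝ 2 e₁) (he₂ : ContDiff ℝ 2 e₂)
    (he₂bd : ∀ x, |e₂ x| ≤ δ)
    (hgrade₁ : ∀ x, ‖gradient e₁ x‖ ≤ δ) (hgrade₂ : ∀ x, ‖gradient e₂ x‖ ≤ δ)
    (hlape₁ : ∀ x, |lap e₁ x| ≤ δ) (hlape₂ : ∀ x, |lap e₂ x| ≤ δ) :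
    ∀ x t,
      |L2 r (fun y s => u y s + e₁ y) (fun y s => m y s + e₂ y) x t - L2 r u m x t|
        ≤ (1 + 6 * M * M' + 3 * M) * δ :=
  stmt13_general M M' hM r hrx hrbd hgradr u m hux hmx hgradu hlapu hmbd hgradm δ hδ0 hδ1 e₁ e₂ he₁
    he₂ he₂bd hgrade₁ hgrade₂ hlape₁ hlape₂
end
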